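/- arXiv:2302.10610 — 2 statements merged into one kernel-verified Lean document; each statement's English description precedes it below -/
import Mathlib

section
/- Fix an integer m ≥ 1 and γ, α ∈ (0,1). The FDP stepdown thresholds αᵢ = (⌊γi⌋ + 1)·α / (m + ⌊γi⌋ + 1 − i) for 1 ≤ i ≤ m form a nondecreasing sequence in i. -/
/-
Write `kᵢ = ⌊γi⌋`. Then `αᵢ = α · xᵢ / (xᵢ + (m - i))` with `xᵢ = kᵢ + 1 > 0`. Along `i ≤ j ≤ m`
the numerator `xᵢ ≤ xⱼ` grows (as `γ ≥ 0`) while the slack `m - i ≥ m - j ≥ 0` shrinks, and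
`x / (x + c)` is increasing in `x > 0` and decreasing in `c ≥ 0`.
-/

theorem div_add_le_div_add {𝕜 : Type*} [Field 𝕜] [LinearOrder 𝕜] [IsStrictOrderedRing 𝕜]
    {x y c d : 𝕜} (hx : 0 < x) (hxy : x ≤ y) (hd : 0 ≤ d) (hdc : d ≤ c) :
    x / (x + c) ≤ y / (y + d) := by
  rw [div_le_div_iff₀ (by linarith) (by linarith)]
  nlinarith [mul_le_mul hxy hdc hd (hx.le.trans hxy)]

theorem fdp_thresholds_monotone_general
    (m : ℕ) (γ α : ℝ)
    (hγ : γ ∈ Set.Ioo (0 : ℝ) 1) (hα : α ∈ Set.Ioo (0 : ℝ) 1) :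
    let thr : ℕ → ℝ := fun i =>
      ((⌊γ * (i : ℝ)⌋ : ℝ) + 1) * α / ((m : ℝ) + (⌊γ * (i : ℝ)⌋ : ℝ) + 1 - i)
    ∀ i j, 1 ≤ i → i ≤ j → j ≤ m → thr i ≤ thr j := by
  intro thr i j _ hij hjm
  have thr_eq (n : ℕ) : thr n =
      α * ((⌊γ * n⌋ + 1) / ((⌊γ * n⌋ + 1) + ((m : ℝ) - n))) := by
    simp only [thr]
    ring
  have floor_mono : (⌊γ * i⌋ : ℝ) ≤ ⌊γ * j⌋ := by
    exact_mod_cast Int.floor_le_floor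
      (mul_le_mul_of_nonneg_left (by exact_mod_cast hij) hγ.1.le)
  have floor_nonneg : (0 : ℝ) ≤ ⌊γ * i⌋ := by
    exact_mod_cast Int.floor_nonneg.mpr (mul_nonneg hγ.1.le i.cast_nonneg)
  have hij' : (i : ℝ) ≤ j := by exact_mod_cast hij
  have hjm' : (j : ℝ) ≤ m := by exact_mod_cast hjm
  rw [thr_eq, thr_eq]
  exact mul_le_mul_of_nonneg_left
    (div_add_le_div_add (by linarith) (by linarith) (by linarith) (by linarith)) hα.1.le

/-- the FDP stepdown thresholds
αᵢ = (⌊γi⌋+1)·α / (m + ⌊γi⌋ + 1 − i) are nondecreasing in i on 1..m. -/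
theorem fdp_thresholds_monotone
    (m : ℕ) (hm : 1 ≤ m) (γ α : ℝ)
    (hγ : γ ∈ Set.Ioo (0 : ℝ) 1) (hα : α ∈ Set.Ioo (0 : ℝ) 1) :
    let thr : ℕ → ℝ := fun i =>
      ((⌊γ * (i : ℝ)⌋ : ℝ) + 1) * α / ((m : ℝ) + (⌊γ * (i : ℝ)⌋ : ℝ) + 1 - i)
    ∀ i j, 1 ≤ i → i ≤ j → j ≤ m → thr i ≤ thr j :=
  fdp_thresholds_monotone_general m γ α hγ hα
end

section
/- Let λ₁ ≥ λ₂ ≥ … ≥ λ_m ≥ 0 with λ₁ > 0. The sorted ℓ₁ penalty J_λ(β) = Σ_{i=1}^{m} λᵢ |β|₍ᵢ₎, where |β|₍₁₎ ≥ … ≥ |β|₍ₘ₎ are the absolute values of the coordinates of β sorted in nonincreasing order, is a norm on ℝᵐ; in particular it is convex, absolutely homogeneous, and vanishes only at 0. -/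
open Finset

/-- `sortedAbs β i` is the (i+1)-th largest among |β₁|,…,|β_m| (nonincreasing order). -/
noncomputable def sortedAbs {m : ℕ} (β : Fin m → ℝ) : Fin m → ℝ :=
  fun i => |β (Tuple.sort (fun j => |β j|) i.rev)|

/-- The sorted ℓ₁ penalty J_λ(β) = Σᵢ λᵢ |β|₍ᵢ₎. -/
noncomputable def slopePen {m : ℕ} (lam : Fin m → ℝ) (β : Fin m → ℝ) : ℝ :=
  ∑ i, lam i * sortedAbs β i

/-!
By the rearrangement inequality, for antitone weights `J_λ(β)` is the largest value of
`∑ᵢ λᵢ |β_{π i}|` over all permutations `π`, attained at the sorting permutation of `β`.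
Evaluating the other side at the sorting permutation of `β₁ + β₂` (resp. of `β` and of `c • β`)
gives subadditivity (using `λ ≥ 0`) and absolute homogeneity, so `J_λ` is a seminorm, hence
convex. Taking `π` to be a transposition shows `λᵢ |βⱼ| ≤ J_λ(β)` for all `i, j`, so `λ₁ > 0`
makes it definite.
-/

namespace SlopePen

variable {m : ℕ}

noncomputable def sortedAbsPerm (β : Fin m → ℝ) : Equiv.Perm (Fin m) :=
  Fin.revPerm.trans (Tuple.sort fun j => |β j|)

theorem sortedAbs_apply (β : Fin m → ℝ) (i : Fin m) :
    sortedAbs β i = |β (sortedAbsPerm β i)| :=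
  rfl

theorem sortedAbs_antitone (β : Fin m → ℝ) : Antitone (sortedAbs β) :=
  fun _ _ hij => Tuple.monotone_sort (fun j => |β j|) (Fin.rev_le_rev.mpr hij)

theorem slopePen_eq_sum_sortedAbsPerm (lam β : Fin m → ℝ) :
    slopePen lam β = ∑ i, lam i * |β (sortedAbsPerm β i)| :=
  rfl

theorem sum_mul_abs_comp_perm_le_slopePen {lam : Fin m → ℝ} (hmono : Antitone lam)
    (β : Fin m → ℝ) (π : Equiv.Perm (Fin m)) :
    ∑ i, lam i * |β (π i)| ≤ slopePen lam β := by
  have hmv : Monovary lam (sortedAbs β) := hmono.monovary (sortedAbs_antitone β)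
  calc ∑ i, lam i * |β (π i)|
      = ∑ i, lam i * sortedAbs β ((π.trans (sortedAbsPerm β).symm) i) := by
        simp [sortedAbs_apply]
    _ ≤ slopePen lam β := hmv.sum_mul_comp_perm_le_sum_mul

theorem slopePen_add_le {lam : Fin m → ℝ} (hmono : Antitone lam) (hnonneg : ∀ i, 0 ≤ lam i)
    (β₁ β₂ : Fin m → ℝ) :
    slopePen lam (β₁ + β₂) ≤ slopePen lam β₁ + slopePen lam β₂ := by
  set σ := sortedAbsPerm (β₁ + β₂)
  calc slopePen lam (β₁ + β₂)
      = ∑ i, lam i * |β₁ (σ i) + β₂ (σ i)| := slopePen_eq_sum_sortedAbsPerm lam _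
    _ ≤ ∑ i, (lam i * |β₁ (σ i)| + lam i * |β₂ (σ i)|) :=
        sum_le_sum fun i _ => by
          rw [← mul_add]; exact mul_le_mul_of_nonneg_left (abs_add_le _ _) (hnonneg i)
    _ = ∑ i, lam i * |β₁ (σ i)| + ∑ i, lam i * |β₂ (σ i)| := sum_add_distrib
    _ ≤ slopePen lam β₁ + slopePen lam β₂ :=
        add_le_add (sum_mul_abs_comp_perm_le_slopePen hmono β₁ σ)
          (sum_mul_abs_comp_perm_le_slopePen hmono β₂ σ)

theorem sum_mul_abs_smul_comp_perm {lam β : Fin m → ℝ} (c : ℝ) (π : Equiv.Perm (Fin m)) :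
    ∑ i, lam i * |(c • β) (π i)| = |c| * ∑ i, lam i * |β (π i)| := by
  simp only [Pi.smul_apply, smul_eq_mul, abs_mul, mul_sum]
  exact sum_congr rfl fun i _ => by ring

theorem slopePen_smul {lam : Fin m → ℝ} (hmono : Antitone lam) (c : ℝ) (β : Fin m → ℝ) :
    slopePen lam (c • β) = |c| * slopePen lam β := by
  apply le_antisymm
  · rw [slopePen_eq_sum_sortedAbsPerm, sum_mul_abs_smul_comp_perm]
    exact mul_le_mul_of_nonneg_left
      (sum_mul_abs_comp_perm_le_slopePen hmono β _) (abs_nonneg c)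
  · rw [slopePen_eq_sum_sortedAbsPerm lam β, ← sum_mul_abs_smul_comp_perm]
    exact sum_mul_abs_comp_perm_le_slopePen hmono (c • β) _

noncomputable def slopeSeminorm {lam : Fin m → ℝ} (hmono : Antitone lam)
    (hnonneg : ∀ i, 0 ≤ lam i) : Seminorm ℝ (Fin m → ℝ) :=
  Seminorm.of (slopePen lam) (slopePen_add_le hmono hnonneg) fun c β => by
    rw [Real.norm_eq_abs, slopePen_smul hmono]

theorem mul_abs_le_slopePen {lam : Fin m → ℝ} (hmono : Antitone lam) (hnonneg : ∀ i, 0 ≤ lam i)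
    (β : Fin m → ℝ) (i j : Fin m) :
    lam i * |β j| ≤ slopePen lam β :=
  calc lam i * |β j| = lam i * |β (Equiv.swap i j i)| := by rw [Equiv.swap_apply_left]
    _ ≤ ∑ k, lam k * |β (Equiv.swap i j k)| :=
        single_le_sum (f := fun k => lam k * |β (Equiv.swap i j k)|)
          (fun k _ => mul_nonneg (hnonneg k) (abs_nonneg _)) (mem_univ i)
    _ ≤ slopePen lam β := sum_mul_abs_comp_perm_le_slopePen hmono β _

theorem slopePen_eq_zero_iff {lam : Fin m → ℝ} (hmono : Antitone lam)
    (hnonneg : ∀ i, 0 ≤ lam i) {i : Fin m} (hpos : 0 < lam i) (β : Fin m → ℝ) :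
    slopePen lam β = 0 ↔ β = 0 := by
  refine ⟨fun hβ => funext fun j => ?_, fun hβ => by simp [hβ, slopePen, sortedAbs]⟩
  have hle := mul_abs_le_slopePen hmono hnonneg β i j
  rw [hβ] at hle
  exact abs_eq_zero.mp
    (le_antisymm (nonpos_of_mul_nonpos_right hle hpos) (abs_nonneg _))

end SlopePen

open SlopePen

/-- for nonincreasing nonnegative weights λ₁ ≥ … ≥ λ_m ≥ 0 with λ₁ > 0,
the sorted ℓ₁ penalty is a norm on ℝᵐ: nonnegative, subadditive, absolutely
homogeneous, vanishing exactly at 0, and in particular convex. -/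
theorem slopePen_is_norm
    {m : ℕ} (hm : 0 < m) (lam : Fin m → ℝ)
    (hmono : Antitone lam) (hnonneg : ∀ i, 0 ≤ lam i)
    (hpos : 0 < lam ⟨0, hm⟩) :
    (∀ β, 0 ≤ slopePen lam β) ∧
    (∀ β₁ β₂, slopePen lam (β₁ + β₂) ≤ slopePen lam β₁ + slopePen lam β₂) ∧
    (∀ (c : ℝ) (β), slopePen lam (c • β) = |c| * slopePen lam β) ∧
    (∀ β, slopePen lam β = 0 ↔ β = 0) ∧
    ConvexOn ℝ Set.univ (slopePen lam) :=
  ⟨apply_nonneg (slopeSeminorm hmono hnonneg), slopePen_add_le hmono hnonneg,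
    slopePen_smul hmono, slopePen_eq_zero_iff hmono hnonneg hpos,
    (slopeSeminorm hmono hnonneg).convexOn⟩
end
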